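/- arXiv:2205.05840 — 3 statements merged into one kernel-verified Lean document; each statement's English description precedes it below -/
import Mathlib

section
/- (Smoothing property.) Let E be a finite-dimensional real inner product space and let R : E → E be a linear operator that is self-adjoint (⟪Ru, v⟫ = ⟪u, Rv⟫ for all u, v) and satisfies 0 ≤ ⟪Rv, v⟫ ≤ ⟪v, v⟫ for all v ∈ E. Then for every integer m ≥ 1 and every v ∈ E, ⟪(I − R)(R^m v), R^m v⟫ ≤ (1/(2m)) · ⟪(I − R^{2m}) v, v⟫, where I denotes the identity operator. -/
/-!
Write `a j := Rʲ (1 - R)`. Then `a j - a (j + 1) = (1 - R) Rʲ (1 - R) ≥ 0`, so `(a j)` is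
antitone in the Loewner order, while `∑_{j < n} a j = 1 - Rⁿ` telescopes. Hence
`n • a n ≤ 1 - Rⁿ`, and with `n = 2m` the quadratic form of `a (2m)` at `v` is
`⟪(1 - R) Rᵐ v, Rᵐ v⟫`.
-/

open RealInnerProductSpace

namespace LinearMap

variable {𝕜 E : Type*} [RCLike 𝕜] [NormedAddCommGroup E] [InnerProductSpace 𝕜 E]
  {T : E →ₗ[𝕜] E}

theorem IsPositive.conj_isSymmetric (hT : T.IsPositive) {S : E →ₗ[𝕜] E}
    (hS : S.IsSymmetric) : (S * T * S).IsPositive := by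
  refine ⟨fun x y => ?_, fun x => ?_⟩
  · simp only [Module.End.mul_apply, hS _, hT.isSymmetric _]
  · simpa only [Module.End.mul_apply, hS _] using hT.re_inner_nonneg_left (S x)

theorem IsPositive.pow (hT : T.IsPositive) (n : ℕ) : (T ^ n).IsPositive := by
  induction n using Nat.twoStepInduction with
  | zero => exact isPositive_one
  | one => simpa using hT
  | more n ih _ =>
    rw [pow_succ, pow_succ']
    exact ih.conj_isSymmetric hT.isSymmetric

theorem IsPositive.antitone_pow_mul_one_sub (hT : T.IsPositive) :
    Antitone fun j : ℕ => T ^ j * (1 - T) := by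
  refine antitone_nat_of_succ_le fun j => ?_
  have hcomm : Commute (1 - T) (T ^ j) := (Commute.one_left _).sub_left (Commute.self_pow T j)
  have hdiff : T ^ j * (1 - T) - T ^ (j + 1) * (1 - T) = (1 - T) * T ^ j * (1 - T) := by
    rw [hcomm.eq, pow_succ, ← sub_mul, ← mul_one_sub]
  rw [le_def, hdiff]
  exact (hT.pow j).conj_isSymmetric (IsSymmetric.id.sub hT.isSymmetric)

theorem IsPositive.nsmul_pow_mul_one_sub_le (hT : T.IsPositive) (n : ℕ) :
    n • (T ^ n * (1 - T)) ≤ 1 - T ^ n := by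
  calc n • (T ^ n * (1 - T))
      ≤ ∑ j ∈ Finset.range n, T ^ j * (1 - T) := by
        simpa only [Finset.card_range] using Finset.card_nsmul_le_sum (Finset.range n) _ _
          fun j hj => hT.antitone_pow_mul_one_sub (Finset.mem_range.mp hj).le
    _ = 1 - T ^ n := by rw [← Finset.sum_mul, geom_sum_mul_neg]

end LinearMap

theorem LinearMap.real_inner_map_self_le_of_le {E : Type*} [NormedAddCommGroup E]
    [InnerProductSpace ℝ E] {f g : E →ₗ[ℝ] E} (h : f ≤ g) (x : E) :
    ⟪f x, x⟫ ≤ ⟪g x, x⟫ := by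
  simpa only [LinearMap.sub_apply, inner_sub_left, sub_nonneg] using h.inner_nonneg_left x

theorem smoothing_property_general
    {E : Type*} [NormedAddCommGroup E] [InnerProductSpace ℝ E]
    (R : E →ₗ[ℝ] E)
    (hsym : ∀ u v : E, ⟪R u, v⟫ = ⟪u, R v⟫)
    (hR0 : ∀ v : E, 0 ≤ ⟪R v, v⟫)
    (m : ℕ) (hm : 1 ≤ m) (v : E) :
    ⟪((LinearMap.id : E →ₗ[ℝ] E) - R) ((R ^ m) v), (R ^ m) v⟫ ≤
      (1 / (2 * (m : ℝ))) * ⟪((LinearMap.id : E →ₗ[ℝ] E) - R ^ (2 * m)) v, v⟫ := by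
  have hR : R.IsPositive := R.isPositive_iff.mpr ⟨hsym, hR0⟩
  have hlhs : ⟪((LinearMap.id : E →ₗ[ℝ] E) - R) ((R ^ m) v), (R ^ m) v⟫ =
      ⟪(R ^ (2 * m) * (1 - R)) v, v⟫ := by
    have hcomm : Commute (1 - R) (R ^ m) := (Commute.one_left _).sub_left (Commute.self_pow R m)
    rw [← (hR.pow m).isSymmetric, two_mul, pow_add, mul_assoc, ← hcomm.eq]
    rfl
  have key := LinearMap.real_inner_map_self_le_of_le (hR.nsmul_pow_mul_one_sub_le (2 * m)) v
  rw [LinearMap.smul_apply, ← Nat.cast_smul_eq_nsmul ℝ, real_inner_smul_left] at key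
  have hpos : (0 : ℝ) < 2 * m := by exact_mod_cast Nat.mul_pos two_pos hm
  rw [hlhs, ← Module.End.one_eq_id, one_div, ← div_eq_inv_mul, le_div_iff₀ hpos]
  push_cast at key
  linarith

/-- Smoothing property: for a self-adjoint operator `R` with `0 ≤ R ≤ I` in the sense of
quadratic forms, `⟪(I - R) (R^m v), R^m v⟫ ≤ (1/(2m)) ⟪(I - R^(2m)) v, v⟫`. -/
theorem smoothing_property
    {E : Type*} [NormedAddCommGroup E] [InnerProductSpace ℝ E] [FiniteDimensional ℝ E]
    (R : E →ₗ[ℝ] E)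
    (hsym : ∀ u v : E, ⟪R u, v⟫ = ⟪u, R v⟫)
    (hR0 : ∀ v : E, 0 ≤ ⟪R v, v⟫)
    (hR1 : ∀ v : E, ⟪R v, v⟫ ≤ ⟪v, v⟫)
    (m : ℕ) (hm : 1 ≤ m) (v : E) :
    ⟪((LinearMap.id : E →ₗ[ℝ] E) - R) ((R ^ m) v), (R ^ m) v⟫ ≤
      (1 / (2 * (m : ℝ))) * ⟪((LinearMap.id : E →ₗ[ℝ] E) - R ^ (2 * m)) v, v⟫ :=
  smoothing_property_general R hsym hR0 m hm v
end

section
/- (Abstract form of the second approximation property.) Let V be a finite-dimensional real vector space equipped with two inner products a(·,·) and b(·,·), and let S : V → V be the unique linear operator satisfying a(u, w) = b(S u, w) for all u, w ∈ V. Let C > 0, and let v, w ∈ V satisfy a(w, v − w) = 0 and b(w, w) ≤ C · a(w, w). Then a(w, w) ≤ C · a(S v, v). -/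
/-!
Orthogonality gives `a w w = a v w = b (S v) w`, and `b (S v) (S v) = a (S v) v`. Cauchy–Schwarz
for `b` then bounds `a w w ^ 2` by `a (S v) v * b w w ≤ a (S v) v * (C * a w w)`, and dividing by
`a w w` (when it is positive) gives the claim.
-/

namespace LinearMap

variable {R M : Type*} [CommRing R] [LinearOrder R] [AddCommGroup M] [Module R M]

lemma apply_self_nonneg_of_pos (B : M →ₗ[R] M →ₗ[R] R) (hB : ∀ x, x ≠ 0 → 0 < B x x)
    (x : M) : 0 ≤ B x x := by
  rcases eq_or_ne x 0 with rfl | hx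
  · simp
  · exact (hB x hx).le

lemma sq_apply_le_of_pos_of_symm [IsStrictOrderedRing R] (B : M →ₗ[R] M →ₗ[R] R)
    (hB : ∀ x, x ≠ 0 → 0 < B x x) (hsymm : ∀ x y, B x y = B y x) (x y : M) :
    B x y ^ 2 ≤ B x x * B y y := by
  rw [sq]
  nth_rw 2 [hsymm]
  exact BilinForm.apply_mul_apply_le_of_forall_zero_le B (B.apply_self_nonneg_of_pos hB) x y

end LinearMap

theorem abstract_approximation_II_general
    {V : Type*} [AddCommGroup V] [Module ℝ V]
    (a b : V →ₗ[ℝ] V →ₗ[ℝ] ℝ)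
    (ha_symm : ∀ u w : V, a u w = a w u)
    (hb_symm : ∀ u w : V, b u w = b w u)
    (hb_pos : ∀ v : V, v ≠ 0 → 0 < b v v)
    (S : V →ₗ[ℝ] V)
    (hS : ∀ u w : V, a u w = b (S u) w)
    (C : ℝ) (hC : 0 < C) (v w : V)
    (horth : a w (v - w) = 0)
    (happrox : b w w ≤ C * a w w) :
    a w w ≤ C * a (S v) v := by
  have hw : a w w = b (S v) w := by
    rw [map_sub, sub_eq_zero] at horth
    rw [← horth, ha_symm, hS]
  have hSv : a (S v) v = b (S v) (S v) := by rw [ha_symm, hS]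
  have hSv_nonneg : 0 ≤ a (S v) v := hSv ▸ b.apply_self_nonneg_of_pos hb_pos (S v)
  have hsq : a w w * a w w ≤ C * a (S v) v * a w w :=
    calc a w w * a w w = b (S v) w ^ 2 := by rw [hw, sq]
      _ ≤ b (S v) (S v) * b w w := b.sq_apply_le_of_pos_of_symm hb_pos hb_symm (S v) w
      _ ≤ a (S v) v * (C * a w w) := by rw [← hSv]; gcongr
      _ = C * a (S v) v * a w w := by ring
  rcases le_or_gt (a w w) 0 with hnonpos | hpos
  · exact hnonpos.trans (by positivity)
  · exact le_of_mul_le_mul_right hsq hpos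

/-- Abstract form of the second approximation property.  With two inner products `a`, `b` on a
finite-dimensional real vector space and `S` determined by `a u w = b (S u) w`, if
`a w (v - w) = 0` and `b w w ≤ C * a w w`, then `a w w ≤ C * a (S v) v`. -/
theorem abstract_approximation_II
    {V : Type*} [AddCommGroup V] [Module ℝ V] [FiniteDimensional ℝ V]
    (a b : V →ₗ[ℝ] V →ₗ[ℝ] ℝ)
    (ha_symm : ∀ u w : V, a u w = a w u)
    (ha_pos : ∀ v : V, v ≠ 0 → 0 < a v v)
    (hb_symm : ∀ u w : V, b u w = b w u)
    (hb_pos : ∀ v : V, v ≠ 0 → 0 < b v v)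
    (S : V →ₗ[ℝ] V)
    (hS : ∀ u w : V, a u w = b (S u) w)
    (C : ℝ) (hC : 0 < C) (v w : V)
    (horth : a w (v - w) = 0)
    (happrox : b w w ≤ C * a w w) :
    a w w ≤ C * a (S v) v :=
  abstract_approximation_II_general a b ha_symm hb_symm hb_pos S hS C hC v w horth happrox
end

section
/- (Two-level V-cycle contraction: the induction step of the convergence theorem.) Let E be a finite-dimensional real inner product space, W a subspace of E, and P : E → E the orthogonal projection onto W. Let R : E → E be linear, self-adjoint, and satisfy 0 ≤ ⟪Rv, v⟫ ≤ ⟪v, v⟫ for all v ∈ E. Let m ≥ 1 be an integer, C > 0 a constant, and assume the approximation property ⟪v − Pv, v − Pv⟫ ≤ C · ⟪(I − R)v, v⟫ for all v ∈ E. Set δ := C/(C + 2m). Let E' : E → E be a linear operator with range contained in W such that ⟪E' w, w⟫ ≤ δ · ⟪w, w⟫ for all w ∈ W. Then the operator Ẽ := R^m ∘ (I − P + E' ∘ P) ∘ R^m satisfies ⟪Ẽ v, v⟫ ≤ δ · ⟪v, v⟫ for all v ∈ E. -/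
open RealInnerProductSpace

/-!
Put `u = R^m v`. Since `E'` maps into `W`, which is orthogonal to `u - P u`, the coarse correction
contributes at most `δ ‖P u‖² = δ (‖u‖² - ‖u - P u‖²)`, so `⟪Ẽ v, v⟫ ≤ (1 - δ) ‖u - P u‖² + δ ‖u‖²`,
and the approximation property bounds `‖u - P u‖²` by `C ⟪(I - R) u, u⟫`. As `R ≥ 0`, the sequence
`b k = ⟪R^k v, v⟫` is convex (its second differences are `⟪R^k (I - R) v, (I - R) v⟫ ≥ 0`), which
gives the smoothing estimate `2m ⟪(I - R) u, u⟫ = 2m (b (2m) - b (2m+1)) ≤ b 0 - b (2m) = ‖v‖² - ‖u‖²`.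
Finally `δ = C / (C + 2m)` is the value with `(1 - δ) C = 2m δ`, so the two bounds add up to `δ ‖v‖²`.
-/

theorem nat_mul_sub_succ_le_sub_of_antitone {f : ℕ → ℝ} (hf : Antitone fun k => f k - f (k + 1))
    (n : ℕ) : n * (f n - f (n + 1)) ≤ f 0 - f n := by
  induction n with
  | zero => simp
  | succ n ih =>
    have hstep : f (n + 1) - f (n + 2) ≤ f n - f (n + 1) := hf n.le_succ
    have hscaled := mul_le_mul_of_nonneg_left hstep (n.cast_nonneg (α := ℝ))
    push_cast
    linarith

namespace LinearMap

variable {E : Type*} [NormedAddCommGroup E] [InnerProductSpace ℝ E] {R : E →ₗ[ℝ] E}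

theorem IsSymmetric.inner_pow_add_apply (hR : R.IsSymmetric) (i j : ℕ) (v : E) :
    ⟪(R ^ (i + j)) v, v⟫ = ⟪(R ^ i) v, (R ^ j) v⟫ := by
  rw [pow_add, Module.End.mul_apply, hR.pow i, real_inner_comm]

theorem IsSymmetric.inner_mul_mul_apply (hR : R.IsSymmetric) (T : E →ₗ[ℝ] E) (v : E) :
    ⟪(R * T * R) v, v⟫ = ⟪T (R v), R v⟫ := by
  rw [Module.End.mul_apply, Module.End.mul_apply, hR]

theorem IsSymmetric.inner_pow_apply_sub_inner_pow_succ_apply (hR : R.IsSymmetric) (k : ℕ)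
    (v : E) :
    (⟪(R ^ k) v, v⟫ - ⟪(R ^ (k + 1)) v, v⟫) - (⟪(R ^ (k + 1)) v, v⟫ - ⟪(R ^ (k + 2)) v, v⟫)
      = ⟪(R ^ k) ((1 - R) v), (1 - R) v⟫ := by
  have hR_pow (n : ℕ) (x : E) : (R ^ (n + 1)) x = R ((R ^ n) x) := by
    rw [pow_succ', Module.End.mul_apply]
  have hpow_R (n : ℕ) (x : E) : (R ^ (n + 1)) x = (R ^ n) (R x) := by
    rw [pow_succ, Module.End.mul_apply]
  simp only [sub_apply, Module.End.one_apply, map_sub, inner_sub_left, inner_sub_right,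
    ← hpow_R, hR_pow (k + 1), hR_pow k]
  rw [← hR ((R ^ k) v), hR (R ((R ^ k) v))]

theorem IsPositive.inner_pow_apply_nonneg (hR : R.IsPositive) (k : ℕ) (u : E) :
    0 ≤ ⟪(R ^ k) u, u⟫ := by
  obtain ⟨j, rfl | rfl⟩ := Nat.even_or_odd' k
  · rw [two_mul, hR.isSymmetric.inner_pow_add_apply]
    exact real_inner_self_nonneg
  · rw [show 2 * j + 1 = (j + 1) + j by ring, hR.isSymmetric.inner_pow_add_apply, pow_succ',
      Module.End.mul_apply]
    exact hR.inner_nonneg_left _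

theorem IsPositive.antitone_inner_pow_apply_sub_inner_pow_succ_apply (hR : R.IsPositive) (v : E) :
    Antitone fun k => ⟪(R ^ k) v, v⟫ - ⟪(R ^ (k + 1)) v, v⟫ :=
  antitone_nat_of_succ_le fun k => sub_nonneg.mp <|
    (hR.isSymmetric.inner_pow_apply_sub_inner_pow_succ_apply k v).symm ▸
      hR.inner_pow_apply_nonneg k _

theorem IsPositive.two_mul_inner_one_sub_apply_pow_apply_le (hR : R.IsPositive) (m : ℕ) (v : E) :
    2 * m * ⟪(1 - R) ((R ^ m) v), (R ^ m) v⟫ ≤ ⟪v, v⟫ - ⟪(R ^ m) v, (R ^ m) v⟫ := by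
  have hsmooth := nat_mul_sub_succ_le_sub_of_antitone
    (hR.antitone_inner_pow_apply_sub_inner_pow_succ_apply v) (2 * m)
  rw [two_mul m, hR.isSymmetric.inner_pow_add_apply, add_right_comm,
    hR.isSymmetric.inner_pow_add_apply, pow_succ', Module.End.mul_apply] at hsmooth
  simp only [Nat.cast_add, pow_zero, Module.End.one_apply] at hsmooth
  rw [sub_apply, Module.End.one_apply, inner_sub_left]
  linarith

end LinearMap

theorem inner_sub_projection_add_coarse_le {E : Type*} [NormedAddCommGroup E]
    [InnerProductSpace ℝ E] {W : Submodule ℝ E} {P E' : E →ₗ[ℝ] E}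
    (hPmem : ∀ x, P x ∈ W) (hPorth : ∀ x, ∀ w ∈ W, ⟪x - P x, w⟫ = 0)
    (hE'range : ∀ x, E' x ∈ W) {δ : ℝ} (hE'bound : ∀ w ∈ W, ⟪E' w, w⟫ ≤ δ * ⟪w, w⟫) (u : E) :
    ⟪u - P u + E' (P u), u⟫ ≤ (1 - δ) * ⟪u - P u, u - P u⟫ + δ * ⟪u, u⟫ := by
  set e := u - P u
  set p := P u
  have hu : u = e + p := (sub_add_cancel u p).symm
  have hep : ⟪e, p⟫ = 0 := hPorth u p (hPmem u)
  have hcoarse : ⟪E' p, e⟫ = 0 := by rw [real_inner_comm]; exact hPorth u _ (hE'range p)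
  have hbound := hE'bound p (hPmem u)
  have hpyth : ⟪u, u⟫ = ⟪e, e⟫ + ⟪p, p⟫ := by
    rw [hu, inner_add_left, inner_add_right, inner_add_right, hep, real_inner_comm e p, hep]
    ring
  have hsplit : ⟪e + E' p, u⟫ = ⟪e, e⟫ + ⟪E' p, p⟫ := by
    rw [hu, inner_add_left, inner_add_right, inner_add_right, hep, hcoarse]
    ring
  rw [hsplit, hpyth]
  linarith

theorem two_level_vcycle_contraction_general
    {E : Type*} [NormedAddCommGroup E] [InnerProductSpace ℝ E]
    (W : Submodule ℝ E) (P : E →ₗ[ℝ] E)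
    (hPmem : ∀ x : E, P x ∈ W)
    (hPorth : ∀ x : E, ∀ w ∈ W, ⟪x - P x, w⟫ = 0)
    (R : E →ₗ[ℝ] E)
    (hsym : ∀ u v : E, ⟪R u, v⟫ = ⟪u, R v⟫)
    (hR0 : ∀ v : E, 0 ≤ ⟪R v, v⟫)
    (m : ℕ) (C : ℝ) (hC : 0 < C)
    (happrox : ∀ v : E, ⟪v - P v, v - P v⟫ ≤ C * ⟪((LinearMap.id : E →ₗ[ℝ] E) - R) v, v⟫)
    (E' : E →ₗ[ℝ] E) (hE'range : ∀ x : E, E' x ∈ W)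
    (hE'bound : ∀ w ∈ W, ⟪E' w, w⟫ ≤ (C / (C + 2 * (m : ℝ))) * ⟪w, w⟫)
    (v : E) :
    ⟪(R ^ m * ((LinearMap.id : E →ₗ[ℝ] E) - P + E' * P) * R ^ m) v, v⟫
      ≤ (C / (C + 2 * (m : ℝ))) * ⟪v, v⟫ := by
  have hR : R.IsPositive := (LinearMap.isPositive_iff R).mpr ⟨hsym, hR0⟩
  set δ := C / (C + 2 * (m : ℝ))
  set u := (R ^ m) v
  have hδ : 1 - δ = 2 * m / (C + 2 * m) := by simp only [δ]; field_simp; ring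
  rw [(hR.isSymmetric.pow m).inner_mul_mul_apply]
  calc ⟪u - P u + E' (P u), u⟫
      ≤ (1 - δ) * ⟪u - P u, u - P u⟫ + δ * ⟪u, u⟫ :=
        inner_sub_projection_add_coarse_le hPmem hPorth hE'range hE'bound u
    _ ≤ (1 - δ) * (C * ⟪(1 - R) u, u⟫) + δ * ⟪u, u⟫ := by
        gcongr
        · rw [hδ]; positivity
        · exact happrox u
    _ = δ * (2 * m * ⟪(1 - R) u, u⟫) + δ * ⟪u, u⟫ := by rw [hδ]; ring
    _ ≤ δ * (⟪v, v⟫ - ⟪u, u⟫) + δ * ⟪u, u⟫ := by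
        gcongr
        exact hR.two_mul_inner_one_sub_apply_pow_apply_le m v
    _ = δ * ⟪v, v⟫ := by ring

/-- Two-level V-cycle contraction (induction step of the convergence theorem).  If `P` is the
orthogonal projection onto a subspace `W`, `R` is self-adjoint with `0 ≤ R ≤ I`, the
approximation property `⟪v - Pv, v - Pv⟫ ≤ C ⟪(I - R) v, v⟫` holds, and the coarse error
operator `E'` maps into `W` with `⟪E' w, w⟫ ≤ δ ⟪w, w⟫` on `W` where `δ = C/(C + 2m)`, then
`Ẽ = R^m (I - P + E' P) R^m` satisfies `⟪Ẽ v, v⟫ ≤ δ ⟪v, v⟫`. -/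
theorem two_level_vcycle_contraction
    {E : Type*} [NormedAddCommGroup E] [InnerProductSpace ℝ E] [FiniteDimensional ℝ E]
    (W : Submodule ℝ E) (P : E →ₗ[ℝ] E)
    (hPmem : ∀ x : E, P x ∈ W)
    (hPfix : ∀ x ∈ W, P x = x)
    (hPorth : ∀ x : E, ∀ w ∈ W, ⟪x - P x, w⟫ = 0)
    (R : E →ₗ[ℝ] E)
    (hsym : ∀ u v : E, ⟪R u, v⟫ = ⟪u, R v⟫)
    (hR0 : ∀ v : E, 0 ≤ ⟪R v, v⟫)
    (hR1 : ∀ v : E, ⟪R v, v⟫ ≤ ⟪v, v⟫)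
    (m : ℕ) (hm : 1 ≤ m) (C : ℝ) (hC : 0 < C)
    (happrox : ∀ v : E, ⟪v - P v, v - P v⟫ ≤ C * ⟪((LinearMap.id : E →ₗ[ℝ] E) - R) v, v⟫)
    (E' : E →ₗ[ℝ] E) (hE'range : ∀ x : E, E' x ∈ W)
    (hE'bound : ∀ w ∈ W, ⟪E' w, w⟫ ≤ (C / (C + 2 * (m : ℝ))) * ⟪w, w⟫)
    (v : E) :
    ⟪(R ^ m * ((LinearMap.id : E →ₗ[ℝ] E) - P + E' * P) * R ^ m) v, v⟫
      ≤ (C / (C + 2 * (m : ℝ))) * ⟪v, v⟫ :=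
  two_level_vcycle_contraction_general W P hPmem hPorth R hsym hR0 m C hC happrox E' hE'range
    hE'bound v
end
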